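/- Let a, b, c be real numbers with c ≠ 0. For every 3×3 matrix P of real polynomials, applying the operators in either order gives the same result: (P·D₁)·D₂ = (P·D₂)·D₁ as matrices of polynomials; that is, the differential operators D₁ and D₂ commute. -/

import Mathlib

open Matrix Polynomial

/-- First-order (polynomial) coefficient of the operator D₁. -/
noncomputable def F1p (a b c : ℝ) : Matrix (Fin 3) (Fin 3) (Polynomial ℝ) :=
  !![C (2 * b) - 2 * X, C (-2 * a * b) * X + C (2 * a), 0;
     0, -2 * X, 0;
     0, C (2 * c), -2 * X]

/-- Zeroth-order coefficient of the operator D₁. -/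
noncomputable def F0p : Matrix (Fin 3) (Fin 3) (Polynomial ℝ) :=
  !![0, 0, 0; 0, 2, 0; 0, 0, 0]

/-- Second-order (polynomial) coefficient of the operator D₂. -/
noncomputable def G2p (a c : ℝ) : Matrix (Fin 3) (Fin 3) (Polynomial ℝ) :=
  !![0, C a * X, 0; 0, 1, 0; 0, C c * X, 0]

/-- First-order (polynomial) coefficient of the operator D₂. -/
noncomputable def G1p (a c : ℝ) : Matrix (Fin 3) (Fin 3) (Polynomial ℝ) :=
  !![0, C (2 * a), C (-2 * a / c) * X;
     0, 0, C (-2 / c);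
     0, C (2 * c + 2 / c), -2 * X]

/-- Zeroth-order coefficient of the operator D₂. -/
noncomputable def G0p (a c : ℝ) : Matrix (Fin 3) (Fin 3) (Polynomial ℝ) :=
  !![C (2 + 4 / c ^ 2), 0, C (-2 * a / c);
     0, C (2 + 4 / c ^ 2), 0;
     0, 0, 0]

/-- The right action of D₁ on a matrix polynomial: P·D₁ = P'' + P'·F₁ + P·F₀. -/
noncomputable def rightD1 (a b c : ℝ) (P : Matrix (Fin 3) (Fin 3) (Polynomial ℝ)) :
    Matrix (Fin 3) (Fin 3) (Polynomial ℝ) :=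
  P.map (fun p => derivative (derivative p))
    + P.map (fun p => derivative p) * F1p a b c + P * F0p

/-- The right action of D₂ on a matrix polynomial: P·D₂ = P''·G₂ + P'·G₁ + P·G₀. -/
noncomputable def rightD2 (a c : ℝ) (P : Matrix (Fin 3) (Fin 3) (Polynomial ℝ)) :
    Matrix (Fin 3) (Fin 3) (Polynomial ℝ) :=
  P.map (fun p => derivative (derivative p)) * G2p a c
    + P.map (fun p => derivative p) * G1p a c + P * G0p a c

/-!
Write a second-order operator as `∑ₖ ∂ᵏ Aₖ` acting on the right. By the Leibniz rule the
composite of two such operators is a fourth-order operator whose coefficients are explicit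
expressions in the `Aₖ`, the `Bₖ` and their derivatives. Hence `D₁D₂ = D₂D₁` reduces to five
identities between 3 × 3 polynomial matrices, not involving `P`. A polynomial identity over `ℝ`
may be checked at every real `x`, where these become identities of rational functions of
`a, b, c, x` whose only denominators are powers of `c`.
-/

namespace Matrix

variable {R : Type*} [CommRing R] {l m n : Type*}

theorem map_derivative_add (P Q : Matrix m n R[X]) :
    (P + Q).map derivative = P.map derivative + Q.map derivative :=
  Matrix.map_add _ (fun _ _ => derivative_add) P Q

theorem map_derivative_mul [Fintype m] (P : Matrix l m R[X]) (Q : Matrix m n R[X]) :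
    (P * Q).map derivative = P.map derivative * Q + P * Q.map derivative := by
  ext i j
  simp [mul_apply, derivative_mul, Finset.sum_add_distrib]

theorem map_derivative_map_C (M : Matrix m n R) : (M.map C).map derivative = 0 := by
  ext i j
  simp

theorem map_derivative_one [DecidableEq n] : (1 : Matrix n n R[X]).map derivative = 0 := by
  rw [← Matrix.map_one C (map_zero C) (map_one C), map_derivative_map_C]

theorem eq_of_forall_mapMatrix_evalRingHom [IsDomain R] [Infinite R] [Fintype n] [DecidableEq n]
    {M N : Matrix n n R[X]} (h : ∀ x, (evalRingHom x).mapMatrix M = (evalRingHom x).mapMatrix N) :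
    M = N :=
  Matrix.ext fun i j => Polynomial.funext fun x => congr_fun₂ (h x) i j

theorem mapMatrix_evalRingHom_map_C [Fintype n] [DecidableEq n] (M : Matrix n n R) (x : R) :
    (evalRingHom x).mapMatrix (M.map C) = M := by
  ext i j
  simp

variable [Fintype n]

/-- The right action `P ↦ ∑ₖ P⁽ᵏ⁾ * A k` of the differential operator `∑ₖ ∂ᵏ A k`. -/
noncomputable def rightDiffOp {k : ℕ} (A : Fin k → Matrix n n R[X]) (P : Matrix m n R[X]) :
    Matrix m n R[X] :=
  ∑ i : Fin k, P.map (derivative^[i]) * A i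

local notation:max M:max "′" => Matrix.map M derivative

theorem rightDiffOp_fin_three (A : Fin 3 → Matrix n n R[X]) (P : Matrix m n R[X]) :
    rightDiffOp A P = P′′ * A 2 + P′ * A 1 + P * A 0 := by
  simp only [rightDiffOp, Fin.sum_univ_three, Fin.isValue, Fin.coe_ofNat_eq_mod, Nat.reduceMod,
    Function.iterate_succ, Function.iterate_zero, Function.id_comp, ← Matrix.map_map, Matrix.map_id]
  abel

theorem rightDiffOp_fin_five (A : Fin 5 → Matrix n n R[X]) (P : Matrix m n R[X]) :
    rightDiffOp A P = P′′′′ * A 4 + P′′′ * A 3 + P′′ * A 2 + P′ * A 1 + P * A 0 := by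
  simp only [rightDiffOp, Fin.sum_univ_five, Fin.isValue, Fin.coe_ofNat_eq_mod, Nat.reduceMod,
    Function.iterate_succ, Function.iterate_zero, Function.id_comp, ← Matrix.map_map, Matrix.map_id]
  abel

noncomputable def rightDiffOp.compCoeffs (A B : Fin 3 → Matrix n n R[X]) :
    Fin 5 → Matrix n n R[X] :=
  ![(A 0)′′ * B 2 + (A 0)′ * B 1 + A 0 * B 0,
    ((A 1)′′ + 2 • (A 0)′) * B 2 + ((A 1)′ + A 0) * B 1 + A 1 * B 0,
    ((A 2)′′ + 2 • (A 1)′ + A 0) * B 2 + ((A 2)′ + A 1) * B 1 + A 2 * B 0,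
    (2 • (A 2)′ + A 1) * B 2 + A 2 * B 1,
    A 2 * B 2]

theorem rightDiffOp_rightDiffOp (A B : Fin 3 → Matrix n n R[X]) (P : Matrix m n R[X]) :
    rightDiffOp B (rightDiffOp A P) = rightDiffOp (rightDiffOp.compCoeffs A B) P := by
  simp only [rightDiffOp_fin_three, rightDiffOp_fin_five, rightDiffOp.compCoeffs, cons_val_zero,
    cons_val_one, cons_val, map_derivative_add, map_derivative_mul, Matrix.add_mul,
    Matrix.mul_add, Matrix.mul_assoc, Matrix.smul_mul, Matrix.mul_smul]
  abel

end Matrix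

open Matrix

theorem rightD1_eq_rightDiffOp (a b c : ℝ) : rightD1 a b c = rightDiffOp ![F0p, F1p a b c, 1] := by
  funext P
  rw [rightDiffOp_fin_three]
  simp only [cons_val_zero, cons_val_one, cons_val, Matrix.mul_one]
  rfl

theorem rightD2_eq_rightDiffOp (a c : ℝ) :
    rightD2 a c = rightDiffOp ![G0p a c, G1p a c, G2p a c] := by
  funext P
  rw [rightDiffOp_fin_three]
  rfl

section Coefficients

variable (a b c x : ℝ)

theorem map_derivative_F0p : F0p.map derivative = 0 := by
  ext i j; fin_cases i <;> fin_cases j <;> simp [F0p]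

theorem map_derivative_F1p :
    (F1p a b c).map derivative =
      (!![-2, -2 * a * b, 0; 0, -2, 0; 0, 0, -2] : Matrix _ _ ℝ).map C := by
  ext i j; fin_cases i <;> fin_cases j <;> simp [F1p, C_ofNat]

theorem map_derivative_G2p :
    (G2p a c).map derivative = (!![0, a, 0; 0, 0, 0; 0, c, 0] : Matrix _ _ ℝ).map C := by
  ext i j; fin_cases i <;> fin_cases j <;> simp [G2p]

theorem map_derivative_G1p :
    (G1p a c).map derivative =
      (!![0, 0, -2 * a / c; 0, 0, 0; 0, 0, -2] : Matrix _ _ ℝ).map C := by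
  ext i j; fin_cases i <;> fin_cases j <;> simp [G1p, C_ofNat]

theorem map_derivative_G0p : (G0p a c).map derivative = 0 := by
  ext i j; fin_cases i <;> fin_cases j <;> simp [G0p]

theorem mapMatrix_evalRingHom_F0p :
    (evalRingHom x).mapMatrix F0p = !![0, 0, 0; 0, 2, 0; 0, 0, 0] := by
  ext i j; fin_cases i <;> fin_cases j <;> simp [F0p]

theorem mapMatrix_evalRingHom_F1p : (evalRingHom x).mapMatrix (F1p a b c) =
    !![2 * b - 2 * x, -2 * a * b * x + 2 * a, 0; 0, -2 * x, 0; 0, 2 * c, -2 * x] := by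
  ext i j; fin_cases i <;> fin_cases j <;> simp [F1p]

theorem mapMatrix_evalRingHom_G2p : (evalRingHom x).mapMatrix (G2p a c) =
    !![0, a * x, 0; 0, 1, 0; 0, c * x, 0] := by
  ext i j; fin_cases i <;> fin_cases j <;> simp [G2p]

theorem mapMatrix_evalRingHom_G1p : (evalRingHom x).mapMatrix (G1p a c) =
    !![0, 2 * a, -2 * a / c * x; 0, 0, -2 / c; 0, 2 * c + 2 / c, -2 * x] := by
  ext i j; fin_cases i <;> fin_cases j <;> simp [G1p]

theorem mapMatrix_evalRingHom_G0p : (evalRingHom x).mapMatrix (G0p a c) =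
    !![2 + 4 / c ^ 2, 0, -2 * a / c; 0, 2 + 4 / c ^ 2, 0; 0, 0, 0] := by
  ext i j; fin_cases i <;> fin_cases j <;> simp [G0p]

theorem compCoeffs_D1_D2_comm (hc : c ≠ 0) :
    rightDiffOp.compCoeffs ![F0p, F1p a b c, 1] ![G0p a c, G1p a c, G2p a c] =
      rightDiffOp.compCoeffs ![G0p a c, G1p a c, G2p a c] ![F0p, F1p a b c, 1] := by
  funext k
  fin_cases k <;>
    simp only [rightDiffOp.compCoeffs, Fin.reduceFinMk, Fin.zero_eta, Fin.mk_one, Fin.isValue,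
      cons_val_zero, cons_val_one, cons_val, map_derivative_F0p, map_derivative_F1p,
      map_derivative_G0p, map_derivative_G1p, map_derivative_G2p, map_derivative_map_C,
      map_derivative_one, Matrix.map_zero, derivative_zero] <;>
    refine eq_of_forall_mapMatrix_evalRingHom fun x => ?_ <;>
    simp only [map_add, map_mul, map_nsmul, map_one, map_zero, mapMatrix_evalRingHom_map_C,
      mapMatrix_evalRingHom_F0p, mapMatrix_evalRingHom_F1p, mapMatrix_evalRingHom_G0p,
      mapMatrix_evalRingHom_G1p, mapMatrix_evalRingHom_G2p] <;>
    ext i j <;>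
    fin_cases i <;> fin_cases j <;> simp [mul_apply, Fin.sum_univ_three] <;> field_simp <;> ring

end Coefficients

/-- the operators D₁ and D₂ commute: (P·D₁)·D₂ = (P·D₂)·D₁
for every matrix polynomial P. -/
theorem D1_D2_commute (a b c : ℝ) (hc : c ≠ 0)
    (P : Matrix (Fin 3) (Fin 3) (Polynomial ℝ)) :
    rightD2 a c (rightD1 a b c P) = rightD1 a b c (rightD2 a c P) := by
  rw [rightD1_eq_rightDiffOp, rightD2_eq_rightDiffOp, rightDiffOp_rightDiffOp,
    rightDiffOp_rightDiffOp, compCoeffs_D1_D2_comm a b c hc]
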